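/- Let μ be a Borel probability measure on a compact interval [−L/2, L/2] ⊂ ℝ, let f̄(a) = Σᵢ λᵢ/((xᵢ−a)² + c) / Σᵢ λᵢ with finitely many terms, λᵢ > 0, c > 0, and suppose f̄(a) ≤ m for all a ∈ [−L/2, L/2] with f̄(a) = m for all a in the support of μ. If f̄ is not identically m on [−L/2, L/2], then the support of μ is a finite set. -/

import Mathlib

/-!
`f̄` is real analytic on all of `ℝ`. If `μ` had infinitely many support points, they would
accumulate in the compact interval, and `f̄ = m` there would force `f̄ ≡ m` on the (connected)
interval by the identity theorem.
-/

open MeasureTheory Set Finset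

def msupport (μ : Measure ℝ) : Set ℝ :=
  {t | ∀ U : Set ℝ, IsOpen U → t ∈ U → 0 < μ U}

theorem analyticOnNhd_sum_div_sq_sub_add {ι : Type*} (s : Finset ι) (w x : ι → ℝ) {c : ℝ}
    (hc : 0 < c) : AnalyticOnNhd ℝ (fun a => ∑ i ∈ s, w i / ((x i - a) ^ 2 + c)) univ := by
  intro a _
  refine Finset.analyticAt_fun_sum _ fun i _ => analyticAt_const.div ?_ ?_
  · fun_prop
  · positivity

theorem AnalyticOnNhd.finite_inter_setOf_eq_of_isCompact {𝕜 E : Type*} [NontriviallyNormedField 𝕜]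
    [NormedAddCommGroup E] [NormedSpace 𝕜 E] {f g : 𝕜 → E} {K : Set 𝕜}
    (hf : AnalyticOnNhd 𝕜 f K) (hg : AnalyticOnNhd 𝕜 g K) (hK : IsCompact K)
    (hK' : IsPreconnected K) (hfg : ¬ EqOn f g K) : (K ∩ {z | f z = g z}).Finite := by
  have hne := (hf.eqOn_or_eventually_ne_of_preconnected hg hK').resolve_left hfg
  exact (hK.finite_sdiff_of_mem_codiscreteWithin hne).subset fun z ⟨hz, hfz⟩ => ⟨hz, (· hfz)⟩

theorem support_finite_1D_general (L c m : ℝ) (hc : 0 < c)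
    (n : ℕ) (x lam : Fin n → ℝ)
    (fbar : ℝ → ℝ)
    (hfbar : ∀ a : ℝ, fbar a = (∑ i, lam i / ((x i - a)^2 + c)) / (∑ i, lam i))
    (μ : Measure ℝ)
    (hsuppsub : msupport μ ⊆ Icc (-(L/2)) (L/2))
    (heq : ∀ a ∈ msupport μ, fbar a = m)
    (hnc : ¬ ∀ a ∈ Icc (-(L/2)) (L/2), fbar a = m) :
    (msupport μ).Finite := by
  have hfbar_an : AnalyticOnNhd ℝ fbar (Icc (-(L/2)) (L/2)) := by
    rw [funext hfbar]
    exact ((analyticOnNhd_sum_div_sq_sub_add _ lam x hc).div_const).mono (subset_univ _)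
  have hfin := hfbar_an.finite_inter_setOf_eq_of_isCompact analyticOnNhd_const isCompact_Icc
    isPreconnected_Icc fun h => hnc fun a ha => h ha
  exact hfin.subset fun a ha => ⟨hsuppsub ha, heq a ha⟩

/-- If a Borel probability measure `μ` on the compact interval `[−L/2, L/2]` is such
that the analytic function `f̄(a) = (Σᵢ λᵢ/((xᵢ−a)² + c)) / Σᵢ λᵢ` satisfies
`f̄ ≤ m` on the interval with equality on the support of `μ`, and `f̄` is not
identically `m` on the interval, then the support of `μ` is a finite set. -/
theorem support_finite_1D (L c m : ℝ) (hL : 0 < L) (hc : 0 < c)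
    (n : ℕ) (x lam : Fin n → ℝ) (hlam : ∀ i, 0 < lam i)
    (fbar : ℝ → ℝ)
    (hfbar : ∀ a : ℝ, fbar a = (∑ i, lam i / ((x i - a)^2 + c)) / (∑ i, lam i))
    (μ : Measure ℝ) [IsProbabilityMeasure μ]
    (hμsupp : μ (Icc (-(L/2)) (L/2))ᶜ = 0)
    (hsuppsub : msupport μ ⊆ Icc (-(L/2)) (L/2))
    (hle : ∀ a ∈ Icc (-(L/2)) (L/2), fbar a ≤ m)
    (heq : ∀ a ∈ msupport μ, fbar a = m)
    (hnc : ¬ ∀ a ∈ Icc (-(L/2)) (L/2), fbar a = m) :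
    (msupport μ).Finite :=
  support_finite_1D_general L c m hc n x lam fbar hfbar μ hsuppsub heq hnc
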